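/- arXiv:math/0601613 — 4 statements merged into one kernel-verified Lean document; each statement's English description precedes it below -/
import Mathlib

section
/- Let X, X_1, X_2, ... be i.i.d. real-valued mean-zero random variables and let {c_n} be a sequence of positive reals satisfying (RE) and (REG). If with probability one limsup_{n→∞} |S_n|/c_n = α₀ < ∞, then ∑_{n=1}^∞ P{|X| ≥ c_n} < ∞. -/
open MeasureTheory ProbabilityTheory Filter Set Topology

/-- The truncated second moment function `H(t) = E[X² 1{|X| ≤ t}]`. -/
noncomputable def truncSecondMoment {Ω : Type*} [MeasurableSpace Ω] (μ : Measure Ω)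
    (X : Ω → ℝ) (t : ℝ) : ℝ :=
  ∫ ω in {ω | |X ω| ≤ t}, (X ω) ^ 2 ∂μ

/-- The set whose supremum is the parameter `α₀`,
namely `{α ≥ 0 : ∑ n⁻¹ exp(-α² cₙ²/(2 n H(cₙ))) = ∞}`. -/
noncomputable def alphaSet (c : ℕ → ℝ) (H : ℝ → ℝ) : Set ℝ :=
  {α : ℝ | 0 ≤ α ∧
    ¬ Summable (fun n : ℕ =>
      (n : ℝ)⁻¹ * Real.exp (-(α ^ 2 * c n ^ 2) / (2 * n * H (c n))))}

/-- If `X, X₁, X₂, …` are i.i.d. mean zero random variables, `(cₙ)` satisfies (RE)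
and (REG), and with probability one `limsup |Sₙ|/cₙ = α₀ < ∞`, then
`∑ P{|X| ≥ cₙ} < ∞`. -/
theorem summable_of_limsup_eq_alpha0
    {Ω : Type*} [MeasurableSpace Ω] (μ : Measure Ω) [IsProbabilityMeasure μ]
    (X : ℕ → Ω → ℝ) (hmeas : ∀ i, Measurable (X i))
    (hindep : iIndepFun X μ)
    (hident : ∀ i, IdentDistrib (X i) (X 0) μ μ)
    (hint : Integrable (X 0) μ) (hmean : ∫ ω, X 0 ω ∂μ = 0)
    (c : ℕ → ℝ) (hcpos : ∀ n, 0 < c n)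
    (hRE : Monotone fun n : ℕ => c n / Real.sqrt n)
    (hRE' : Tendsto (fun n : ℕ => c n / Real.sqrt n) atTop atTop)
    (hREG : ∀ ε > (0:ℝ), ∃ mₑ : ℕ, 1 ≤ mₑ ∧
      ∀ m n : ℕ, mₑ ≤ m → m < n → c n / c m ≤ (1 + ε) * ((n : ℝ) / m))
    (hα₀ : BddAbove (alphaSet c (truncSecondMoment μ (X 0))))
    (hlimsup : ∀ᵐ ω ∂μ,
      Filter.limsup
          (fun n : ℕ => ((|∑ i ∈ Finset.range n, X i ω| / c n : ℝ) : EReal)) atTop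
        = ((sSup (alphaSet c (truncSecondMoment μ (X 0))) : ℝ) : EReal)) :
    (∑' n : ℕ, μ {ω | c n ≤ |X 0 ω|}) < ⊤ := by
  classical
  set α₀ := sSup (alphaSet c (truncSecondMoment μ (X 0))) with hα₀def
  -- α₀ ≥ 0 since 0 belongs to the alpha set
  have h0mem : (0:ℝ) ∈ alphaSet c (truncSecondMoment μ (X 0)) := by
    refine ⟨le_refl 0, fun hsum => Real.not_summable_natCast_inv ?_⟩
    simpa using hsum
  have hα₀nonneg : (0:ℝ) ≤ α₀ := le_csSup hα₀ h0mem
  set a : ℝ := α₀ + 1 with ha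
  have hapos : 0 < a := by linarith
  set B : ℝ := 5 * a with hB
  have hBpos : 0 < B := by linarith
  -- REG with ε = 1 gives c (n+1) ≤ 4 c n for large n
  obtain ⟨m₁, hm₁, hreg⟩ := hREG 1 one_pos
  have hc4 : ∀ n, m₁ ≤ n → c (n + 1) ≤ 4 * c n := by
    intro n hn
    have hn1 : 1 ≤ n := le_trans hm₁ hn
    have hn1' : (1:ℝ) ≤ n := by exact_mod_cast hn1
    have h := hreg n (n + 1) hn (Nat.lt_succ_self n)
    have hratio : ((n + 1 : ℕ) : ℝ) / n ≤ 2 := by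
      rw [div_le_iff₀ (by linarith)]
      push_cast
      linarith
    have h2 : c (n + 1) / c n ≤ 4 := by
      calc c (n + 1) / c n ≤ (1 + 1) * (((n + 1 : ℕ) : ℝ) / n) := h
        _ ≤ 2 * 2 := by nlinarith [Nat.cast_div_le (m := n + 1) (n := n) (α := ℝ)]
        _ = 4 := by norm_num
    rw [div_le_iff₀ (hcpos n)] at h2
    linarith
  -- the bad events
  set A : ℕ → Set Ω := fun n => X n ⁻¹' {x : ℝ | B * c n ≤ |x|} with hA
  have hTmeas : ∀ n, MeasurableSet {x : ℝ | B * c n ≤ |x|} := fun n =>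
    measurableSet_le measurable_const measurable_abs
  have hA_meas : ∀ n, MeasurableSet (A n) := fun n => (hmeas n) (hTmeas n)
  -- a.s. only finitely many bad events occur
  have hae : ∀ᵐ ω ∂μ, ∀ᶠ n in atTop, ω ∉ A n := by
    filter_upwards [hlimsup] with ω hω
    have hlt : Filter.limsup
        (fun n : ℕ => ((|∑ i ∈ Finset.range n, X i ω| / c n : ℝ) : EReal)) atTop
        < ((a : ℝ) : EReal) := by
      rw [hω]
      exact_mod_cast (lt_add_one α₀)
    have h1 := Filter.eventually_lt_of_limsup_lt hlt
    rw [eventually_atTop] at h1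
    obtain ⟨N, hN⟩ := h1
    have hS : ∀ n, N ≤ n → |∑ i ∈ Finset.range n, X i ω| < a * c n := by
      intro n hn
      have h2 : |∑ i ∈ Finset.range n, X i ω| / c n < a := by exact_mod_cast hN n hn
      have := (div_lt_iff₀ (hcpos n)).1 h2
      linarith
    refine eventually_atTop.2 ⟨max N m₁, fun n hn => ?_⟩
    have hnN : N ≤ n := le_trans (le_max_left _ _) hn
    have hnm : m₁ ≤ n := le_trans (le_max_right _ _) hn
    intro hmem
    have hmem' : B * c n ≤ |X n ω| := hmem
    have hX : X n ω = (∑ i ∈ Finset.range (n + 1), X i ω) - ∑ i ∈ Finset.range n, X i ω := by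
      rw [Finset.sum_range_succ]; ring
    have h3 : |X n ω| ≤ |∑ i ∈ Finset.range (n + 1), X i ω| + |∑ i ∈ Finset.range n, X i ω| := by
      rw [hX]; exact abs_sub _ _
    have h4 := hS (n + 1) (le_trans hnN (Nat.le_succ n))
    have h5 := hS n hnN
    have h6 := hc4 n hnm
    nlinarith [hcpos n, hcpos (n + 1)]
  -- hence the limsup of the bad events is null
  have hlimA : μ (limsup A atTop) = 0 := by
    rw [measure_eq_zero_iff_ae_notMem]
    filter_upwards [hae] with ω hω hmem
    rw [mem_limsup_iff_frequently_mem] at hmem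
    exact hmem hω
  -- the bad events are independent
  have hindepA : iIndepSet A μ := by
    rw [iIndepSet_iff_meas_biInter hA_meas]
    intro s
    exact hindep.measure_inter_preimage_eq_mul s (fun i _ => hTmeas i)
  -- second Borel-Cantelli, contrapositive
  have hsumA : (∑' n, μ (A n)) ≠ ⊤ := by
    intro htop
    have h1 := ProbabilityTheory.measure_limsup_eq_one hA_meas hindepA htop
    rw [hlimA] at h1
    exact zero_ne_one h1
  -- transfer to X 0 via identical distribution
  have hAident : ∀ n, μ (A n) = μ (X 0 ⁻¹' {x : ℝ | B * c n ≤ |x|}) := fun n =>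
    (hident n).measure_mem_eq (hTmeas n)
  have hS0 : (∑' n, μ (X 0 ⁻¹' {x : ℝ | B * c n ≤ |x|})) ≠ ⊤ := by
    rw [← tsum_congr hAident]
    exact hsumA
  -- the blocking constant
  set K : ℕ := ⌈B ^ 2⌉₊ + 1 with hK
  have hKpos : 0 < K := Nat.succ_pos _
  haveI : NeZero K := ⟨Nat.pos_iff_ne_zero.1 hKpos⟩
  have hBK : B ≤ Real.sqrt K := by
    rw [Real.le_sqrt' hBpos]
    calc B ^ 2 ≤ (⌈B ^ 2⌉₊ : ℝ) := Nat.le_ceil _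
      _ ≤ (K : ℝ) := by rw [hK]; push_cast; linarith
  -- c (K * n) dominates B * c n
  have hcK : ∀ n : ℕ, 1 ≤ n → B * c n ≤ c (K * n) := by
    intro n hn
    have hn' : (0:ℝ) < n := by exact_mod_cast hn
    have hsn : (0:ℝ) < Real.sqrt n := Real.sqrt_pos.2 hn'
    have hKn' : (0:ℝ) < (K * n : ℕ) := by positivity
    have hsKn : (0:ℝ) < Real.sqrt ((K * n : ℕ) : ℝ) := Real.sqrt_pos.2 hKn'
    have hmono := hRE (show n ≤ K * n from Nat.le_mul_of_pos_left n hKpos)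
    have h1 : c n / Real.sqrt n * Real.sqrt ((K * n : ℕ) : ℝ) ≤ c (K * n) := by
      have := mul_le_mul_of_nonneg_right hmono hsKn.le
      rwa [div_mul_cancel₀ _ (ne_of_gt hsKn)] at this
    have h2 : c n / Real.sqrt n * Real.sqrt ((K * n : ℕ) : ℝ) = c n * Real.sqrt K := by
      rw [show ((K * n : ℕ) : ℝ) = (K : ℝ) * (n : ℝ) by push_cast; ring,
        Real.sqrt_mul (by positivity) (n : ℝ)]
      field_simp
    rw [h2] at h1
    calc B * c n ≤ Real.sqrt K * c n :=
          mul_le_mul_of_nonneg_right hBK (hcpos n).le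
      _ = c n * Real.sqrt K := mul_comm _ _
      _ ≤ c (K * n) := h1
  -- monotonicity of c (for indices ≥ 1)
  have hcmono : ∀ m m' : ℕ, 1 ≤ m → m ≤ m' → c m ≤ c m' := by
    intro m m' hm hmm'
    have hm' : 1 ≤ m' := le_trans hm hmm'
    have hsm : (0:ℝ) < Real.sqrt m := Real.sqrt_pos.2 (by exact_mod_cast hm)
    have hsm' : (0:ℝ) < Real.sqrt m' := Real.sqrt_pos.2 (by exact_mod_cast hm')
    have h1 := hRE hmm'
    have h2 : Real.sqrt m ≤ Real.sqrt m' := Real.sqrt_le_sqrt (by exact_mod_cast hmm')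
    calc c m = c m / Real.sqrt m * Real.sqrt m := by field_simp
      _ ≤ c m' / Real.sqrt m' * Real.sqrt m' := by
          exact mul_le_mul h1 h2 hsm.le (div_nonneg (hcpos m').le (Real.sqrt_nonneg _))
      _ = c m' := by field_simp
  set g : ℕ → ENNReal := fun m => μ {ω | c m ≤ |X 0 ω|} with hg
  have hganti : ∀ m m' : ℕ, 1 ≤ m → m ≤ m' → g m' ≤ g m := by
    intro m m' hm hmm'
    exact measure_mono fun ω hω => le_trans (hcmono m m' hm hmm') hω
  -- summability along multiples of K
  have hKsum : (∑' n, g (K * n)) ≠ ⊤ := by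
    have hle : ∀ n : ℕ, g (K * n) ≤
        (if n = 0 then 1 else 0) + μ (X 0 ⁻¹' {x : ℝ | B * c n ≤ |x|}) := by
      intro n
      rcases n with _ | n
      · simp only [if_pos rfl]
        exact le_trans prob_le_one le_self_add
      · simp only [if_neg (Nat.succ_ne_zero n), zero_add]
        refine measure_mono fun ω hω => ?_
        exact le_trans (hcK (n + 1) (Nat.succ_le_succ (Nat.zero_le n))) hω
    have hle2 : (∑' n, g (K * n)) ≤ 1 + ∑' n, μ (X 0 ⁻¹' {x : ℝ | B * c n ≤ |x|}) := by
      calc (∑' n, g (K * n))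
          ≤ ∑' n, ((if n = 0 then 1 else 0) + μ (X 0 ⁻¹' {x : ℝ | B * c n ≤ |x|})) :=
            ENNReal.tsum_le_tsum hle
        _ = (∑' n, (if n = 0 then (1:ENNReal) else 0)) +
            ∑' n, μ (X 0 ⁻¹' {x : ℝ | B * c n ≤ |x|}) := ENNReal.tsum_add
        _ = 1 + ∑' n, μ (X 0 ⁻¹' {x : ℝ | B * c n ≤ |x|}) := by rw [tsum_ite_eq]
    exact ne_top_of_le_ne_top (ENNReal.add_ne_top.2 ⟨ENNReal.one_ne_top, hS0⟩) hle2
  -- conclude by blocking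
  have key : (∑' m, g m) ≤ (K : ENNReal) * (1 + ∑' n, g (K * n)) := by
    rw [← ((Nat.divModEquiv K).symm.tsum_eq g)]
    simp only [Nat.divModEquiv_symm_apply]
    rw [ENNReal.tsum_prod']
    calc (∑' (q : ℕ) (r : Fin K), g (q * K + (r : ℕ)))
        ≤ ∑' (q : ℕ) (r : Fin K), ((if q = 0 then 1 else 0) + g (K * q)) := by
          refine ENNReal.tsum_le_tsum fun q => ENNReal.tsum_le_tsum fun r => ?_
          rcases q with _ | q
          · simp only [if_pos rfl, Nat.zero_mul, Nat.zero_add, Nat.mul_zero]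
            exact le_trans prob_le_one le_self_add
          · simp only [if_neg (Nat.succ_ne_zero q), zero_add]
            refine hganti (K * (q + 1)) ((q + 1) * K + (r : ℕ)) ?_ ?_
            · exact Nat.one_le_iff_ne_zero.2 (Nat.mul_ne_zero (Nat.pos_iff_ne_zero.1 hKpos)
                (Nat.succ_ne_zero q))
            · rw [Nat.mul_comm]
              exact Nat.le_add_right _ _
      _ = ∑' (q : ℕ), (K : ENNReal) * ((if q = 0 then 1 else 0) + g (K * q)) := by
          refine tsum_congr fun q => ?_
          rw [tsum_fintype]
          simp only [Finset.sum_const, Finset.card_univ, Fintype.card_fin, nsmul_eq_mul]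
      _ = (K : ENNReal) * ∑' (q : ℕ), ((if q = 0 then 1 else 0) + g (K * q)) :=
          ENNReal.tsum_mul_left
      _ = (K : ENNReal) * (1 + ∑' n, g (K * n)) := by
          rw [ENNReal.tsum_add, tsum_ite_eq]
  refine lt_of_le_of_lt key ?_
  exact ENNReal.mul_lt_top (ENNReal.natCast_lt_top K)
    (lt_top_iff_ne_top.2 (ENNReal.add_ne_top.2 ⟨ENNReal.one_ne_top, hKsum⟩))
end

section
/- Let X be a real-valued random variable with 0 < E|X| < ∞, and let H(t) = E[X² 1{|X| ≤ t}], M(t) = E[|X| 1{|X| > t}]. Then the function G(t) = t²/(H(t) + t M(t)), t > 0, is continuous and increasing, and its inverse function K satisfies: K(x)/√x is nondecreasing in x and converges to (E X²)^{1/2} ∈ (0, ∞] as x → ∞, and K(x)/x is nonincreasing in x and converges to 0 as x → ∞. -/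
open MeasureTheory ProbabilityTheory Filter Set Topology ENNReal

/-- `M(t) = E[|X| 1{|X| > t}]`. -/
noncomputable def truncFirstMoment {Ω : Type*} [MeasurableSpace Ω] (μ : Measure Ω)
    (X : Ω → ℝ) (t : ℝ) : ℝ :=
  ∫ ω in {ω | t < |X ω|}, |X ω| ∂μ

noncomputable def Dfun {Ω : Type*} [MeasurableSpace Ω] (μ : Measure Ω) (X : Ω → ℝ) (t : ℝ) : ℝ :=
  ∫ ω, |X ω| * min (|X ω|) t ∂μ

lemma aux_abs_min_le {a t : ℝ} (ha : 0 ≤ a) : |min a t| ≤ |t| := by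
  rcases le_total a t with h | h
  · rw [min_eq_left h, abs_of_nonneg ha]
    exact h.trans (le_abs_self t)
  · rw [min_eq_right h]

lemma aux_ratio {a s t : ℝ} (ha : 0 ≤ a) (hs : 0 ≤ s) (hst : s ≤ t) :
    s * (a * min a t) ≤ t * (a * min a s) := by
  rcases le_total a s with h | h
  · rw [min_eq_left h, min_eq_left (h.trans hst)]
    nlinarith
  · rw [min_eq_right h]
    rcases le_total a t with h2 | h2
    · rw [min_eq_left h2]
      nlinarith [mul_nonneg (mul_nonneg hs ha) (sub_nonneg.mpr h2)]
    · rw [min_eq_right h2]; nlinarith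

section Meas
variable {Ω : Type*} [MeasurableSpace Ω] {μ : Measure Ω} {X : Ω → ℝ}

lemma Dmeas (hX : Measurable X) (t : ℝ) :
    Measurable fun ω => |X ω| * min (|X ω|) t :=
  hX.abs.mul (hX.abs.min measurable_const)

lemma Dint (hX : Measurable X) (hint : Integrable X μ) (t : ℝ) :
    Integrable (fun ω => |X ω| * min (|X ω|) t) μ := by
  refine (hint.abs.const_mul |t|).mono' (Dmeas hX t).aestronglyMeasurable ?_
  filter_upwards with ω
  rw [norm_mul, Real.norm_eq_abs, Real.norm_eq_abs, abs_abs, mul_comm |t| _]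
  exact mul_le_mul_of_nonneg_left (aux_abs_min_le (abs_nonneg _)) (abs_nonneg _)

lemma Dmono (hX : Measurable X) (hint : Integrable X μ) : Monotone (Dfun μ X) := by
  intro s t hst
  exact integral_mono (Dint hX hint s) (Dint hX hint t)
    (fun ω => mul_le_mul_of_nonneg_left (min_le_min le_rfl hst) (abs_nonneg _))

lemma Dnonneg (t : ℝ) (ht : 0 ≤ t) : 0 ≤ Dfun μ X t :=
  integral_nonneg fun ω => mul_nonneg (abs_nonneg _) (le_min (abs_nonneg _) ht)

lemma Dpos (hX : Measurable X) (hint : Integrable X μ)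
    (habs : 0 < ∫ ω, |X ω| ∂μ) {t : ℝ} (ht : 0 < t) : 0 < Dfun μ X t := by
  have h1 : 0 < μ (Function.support fun ω => |X ω|) :=
    (integral_pos_iff_support_of_nonneg (fun ω => abs_nonneg _) hint.abs).mp habs
  have hsupp : (Function.support fun ω => |X ω|) =
      Function.support fun ω => |X ω| * min (|X ω|) t := by
    ext ω
    simp only [Function.mem_support, ne_eq]
    constructor
    · intro h h'
      have ha : 0 < |X ω| := lt_of_le_of_ne (abs_nonneg _) (Ne.symm h)
      have : 0 < |X ω| * min (|X ω|) t := mul_pos ha (lt_min ha ht)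
      exact this.ne' h'
    · intro h h'
      exact h (by rw [h', zero_mul])
  rw [hsupp] at h1
  exact (integral_pos_iff_support_of_nonneg
    (fun ω => mul_nonneg (abs_nonneg _) (le_min (abs_nonneg _) ht.le))
    (Dint hX hint t)).mpr h1

lemma Dratio (hX : Measurable X) (hint : Integrable X μ) {s t : ℝ}
    (hs : 0 ≤ s) (hst : s ≤ t) : s * Dfun μ X t ≤ t * Dfun μ X s := by
  rw [Dfun, Dfun, ← integral_const_mul, ← integral_const_mul]
  exact integral_mono ((Dint hX hint t).const_mul s) ((Dint hX hint s).const_mul t)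
    (fun ω => aux_ratio (abs_nonneg _) hs hst)

lemma Dcont (hX : Measurable X) (hint : Integrable X μ) : Continuous (Dfun μ X) := by
  rw [continuous_iff_continuousAt]
  intro t₀
  refine tendsto_integral_filter_of_dominated_convergence (fun ω => (|t₀| + 1) * |X ω|)
    (Eventually.of_forall fun t => (Dmeas hX t).aestronglyMeasurable) ?_
    (hint.abs.const_mul _) ?_
  · have hmem : Ioo (t₀ - 1) (t₀ + 1) ∈ 𝓝 t₀ := Ioo_mem_nhds (by linarith) (by linarith)
    filter_upwards [hmem] with t ht
    filter_upwards with ω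
    rw [Real.norm_eq_abs, abs_mul, abs_abs, mul_comm ((|t₀| + 1)) _]
    refine mul_le_mul_of_nonneg_left ?_ (abs_nonneg _)
    refine (aux_abs_min_le (abs_nonneg _)).trans ?_
    rw [abs_le]
    constructor
    · have := neg_abs_le t₀; linarith [ht.1]
    · have := le_abs_self t₀; linarith [ht.2]
  · refine Eventually.of_forall fun ω => ?_
    exact (continuous_const.mul (continuous_const.min continuous_id)).tendsto t₀

lemma Dsplit (hX : Measurable X) (hint : Integrable X μ) (t : ℝ) :
    truncSecondMoment μ X t + t * truncFirstMoment μ X t = Dfun μ X t := by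
  have hs : MeasurableSet {ω | |X ω| ≤ t} := measurableSet_le hX.abs measurable_const
  have h1 : ∫ ω in {ω | |X ω| ≤ t}, |X ω| * min (|X ω|) t ∂μ = truncSecondMoment μ X t := by
    refine setIntegral_congr_fun hs fun ω hω => ?_
    rw [min_eq_left hω, ← sq_abs, sq]
  have h2 : ∫ ω in {ω | |X ω| ≤ t}ᶜ, |X ω| * min (|X ω|) t ∂μ = t * truncFirstMoment μ X t := by
    have hset : {ω | |X ω| ≤ t}ᶜ = {ω | t < |X ω|} := by ext ω; simp [not_le]
    rw [hset, truncFirstMoment, ← integral_const_mul]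
    refine setIntegral_congr_fun (by rw [← hset]; exact hs.compl) fun ω hω => ?_
    rw [min_eq_right (le_of_lt hω), mul_comm]
  rw [← h1, ← h2, Dfun]
  symm
  exact (integral_add_compl hs (Dint hX hint t)).symm

lemma Dtendsto_zero (hX : Measurable X) (hint : Integrable X μ) :
    Tendsto (fun t : ℝ => Dfun μ X t / t) atTop (𝓝 0) := by
  have h : Tendsto (fun t : ℝ => ∫ ω, |X ω| * min (|X ω|) t / t ∂μ) atTop
      (𝓝 (∫ ω, (0:ℝ) ∂μ)) := by
    refine tendsto_integral_filter_of_dominated_convergence (fun ω => |X ω|)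
      (Eventually.of_forall fun t => ((Dmeas hX t).div_const t).aestronglyMeasurable)
      ?_ hint.abs ?_
    · filter_upwards [eventually_ge_atTop (1:ℝ)] with t ht
      filter_upwards with ω
      have ht0 : (0:ℝ) < t := by linarith
      rw [Real.norm_eq_abs, abs_div, abs_of_pos ht0, abs_mul, abs_abs, div_le_iff₀ ht0]
      refine mul_le_mul_of_nonneg_left ?_ (abs_nonneg _)
      exact (aux_abs_min_le (abs_nonneg _)).trans (le_of_eq (abs_of_pos ht0))
    · refine Eventually.of_forall fun ω => ?_
      have heq : (fun t : ℝ => (|X ω| * |X ω|) / t) =ᶠ[atTop]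
          (fun t : ℝ => |X ω| * min (|X ω|) t / t) := by
        filter_upwards [eventually_ge_atTop (|X ω|)] with t ht
        rw [min_eq_left ht]
      exact (tendsto_const_nhds.div_atTop tendsto_id).congr' heq
  rw [integral_zero] at h
  refine h.congr fun t => ?_
  exact integral_div t _

lemma Dlim (hX : Measurable X) (hint : Integrable X μ) :
    Tendsto (fun t : ℝ => ENNReal.ofReal (Dfun μ X t)) atTop
      (𝓝 (∫⁻ ω, ENNReal.ofReal ((X ω)^2) ∂μ)) := by
  set F : ℝ → ℝ≥0∞ := fun t => ∫⁻ ω, ENNReal.ofReal (|X ω| * min (|X ω|) t) ∂μ with hF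
  have hFmono : Monotone F := fun s t hst => lintegral_mono fun ω =>
    ENNReal.ofReal_le_ofReal
      (mul_le_mul_of_nonneg_left (min_le_min le_rfl hst) (abs_nonneg _))
  have hFtend : Tendsto F atTop (𝓝 (⨆ t, F t)) := tendsto_atTop_iSup hFmono
  have hptle : ∀ (ω : Ω) (t : ℝ), |X ω| * min (|X ω|) t ≤ (X ω)^2 := by
    intro ω t
    calc |X ω| * min (|X ω|) t ≤ |X ω| * |X ω| :=
          mul_le_mul_of_nonneg_left (min_le_left _ _) (abs_nonneg _)
      _ = (X ω)^2 := by rw [← sq_abs]; ring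
  have hsup : (⨆ t : ℝ, F t) = ∫⁻ ω, ENNReal.ofReal ((X ω)^2) ∂μ := by
    apply le_antisymm
    · exact iSup_le fun t => lintegral_mono fun ω =>
        ENNReal.ofReal_le_ofReal (hptle ω t)
    · have h2 : ∀ ω, (⨆ n : ℕ, ENNReal.ofReal (|X ω| * min (|X ω|) (n:ℝ)))
          = ENNReal.ofReal ((X ω)^2) := by
        intro ω
        apply le_antisymm
        · exact iSup_le fun n => ENNReal.ofReal_le_ofReal (hptle ω n)
        · refine le_trans (le_of_eq ?_) (le_iSup _ (⌈|X ω|⌉₊))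
          rw [min_eq_left (Nat.le_ceil _), ← sq_abs, sq]
      have h1 : ∫⁻ ω, ⨆ n : ℕ, ENNReal.ofReal (|X ω| * min (|X ω|) (n:ℝ)) ∂μ
          = ⨆ n : ℕ, F (n:ℝ) :=
        lintegral_iSup (fun n => (Dmeas hX (n:ℝ)).ennreal_ofReal)
          (fun m n hmn ω => ENNReal.ofReal_le_ofReal
            (mul_le_mul_of_nonneg_left (min_le_min le_rfl (by exact_mod_cast hmn))
              (abs_nonneg _)))
      calc ∫⁻ ω, ENNReal.ofReal ((X ω)^2) ∂μ
          = ∫⁻ ω, ⨆ n : ℕ, ENNReal.ofReal (|X ω| * min (|X ω|) (n:ℝ)) ∂μ :=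
            (lintegral_congr h2).symm
        _ = ⨆ n : ℕ, F (n:ℝ) := h1
        _ ≤ ⨆ t : ℝ, F t := iSup_le fun n => le_iSup F (n:ℝ)
  rw [← hsup]
  refine hFtend.congr' ?_
  filter_upwards [eventually_ge_atTop (0:ℝ)] with t ht
  exact (ofReal_integral_eq_lintegral_ofReal (Dint hX hint t)
    (Eventually.of_forall fun ω => mul_nonneg (abs_nonneg _) (le_min (abs_nonneg _) ht))).symm

end Meas


/-- Let `X` be a random variable with `0 < E|X| < ∞`.  Then
`G(t) = t²/(H(t) + t M(t))` is continuous and (strictly) increasing on `(0,∞)`,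
and its inverse function `K` satisfies: `K(x)/√x` is nondecreasing and converges
to `(E X²)^{1/2} ∈ (0,∞]`, while `K(x)/x` is nonincreasing and converges to `0`. -/
theorem Klass_K_function_properties
    {Ω : Type*} [MeasurableSpace Ω] (μ : Measure Ω) [IsProbabilityMeasure μ]
    (X : Ω → ℝ) (hXmeas : Measurable X)
    (hint : Integrable X μ) (habs : 0 < ∫ ω, |X ω| ∂μ)
    (Kf : ℝ → ℝ)
    (hK₁ : ∀ t > (0:ℝ),
      Kf (t ^ 2 / (truncSecondMoment μ X t + t * truncFirstMoment μ X t)) = t)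
    (hK₂ : ∀ x > (0:ℝ), 0 < Kf x ∧
      (Kf x) ^ 2 / (truncSecondMoment μ X (Kf x)
        + Kf x * truncFirstMoment μ X (Kf x)) = x) :
    ContinuousOn
        (fun t : ℝ => t ^ 2 / (truncSecondMoment μ X t + t * truncFirstMoment μ X t))
        (Ioi 0) ∧
    StrictMonoOn
        (fun t : ℝ => t ^ 2 / (truncSecondMoment μ X t + t * truncFirstMoment μ X t))
        (Ioi 0) ∧
    MonotoneOn (fun x : ℝ => Kf x / Real.sqrt x) (Ioi 0) ∧
    (0 : ℝ≥0∞) < (∫⁻ ω, ENNReal.ofReal ((X ω) ^ 2) ∂μ) ^ (1/2 : ℝ) ∧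
    Tendsto (fun x : ℝ => ENNReal.ofReal (Kf x / Real.sqrt x)) atTop
      (𝓝 ((∫⁻ ω, ENNReal.ofReal ((X ω) ^ 2) ∂μ) ^ (1/2 : ℝ))) ∧
    AntitoneOn (fun x : ℝ => Kf x / x) (Ioi 0) ∧
    Tendsto (fun x : ℝ => Kf x / x) atTop (𝓝 0) := by
  have hsplit : ∀ t : ℝ, truncSecondMoment μ X t + t * truncFirstMoment μ X t
      = Dfun μ X t := Dsplit hXmeas hint
  set G : ℝ → ℝ := fun t => t ^ 2 / Dfun μ X t with hG
  have hfeq : (fun t : ℝ =>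
      t ^ 2 / (truncSecondMoment μ X t + t * truncFirstMoment μ X t)) = G := by
    funext t; rw [hsplit t]
  have hDpos : ∀ {t : ℝ}, 0 < t → 0 < Dfun μ X t := fun ht => Dpos hXmeas hint habs ht
  have hGsm : StrictMonoOn G (Ioi 0) := by
    intro s hs t ht hst
    simp only [hG]
    rw [div_lt_div_iff₀ (hDpos hs) (hDpos ht)]
    calc s ^ 2 * Dfun μ X t = s * (s * Dfun μ X t) := by ring
      _ ≤ s * (t * Dfun μ X s) :=
          mul_le_mul_of_nonneg_left (Dratio hXmeas hint hs.le hst.le) hs.le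
      _ < t * (t * Dfun μ X s) :=
          mul_lt_mul_of_pos_right hst (mul_pos ht (hDpos hs))
      _ = t ^ 2 * Dfun μ X s := by ring
  have hGcont : ContinuousOn G (Ioi 0) := by
    refine ContinuousOn.div (continuous_pow 2).continuousOn
      (Dcont hXmeas hint).continuousOn fun t ht => (hDpos ht).ne'
  have hK₂' : ∀ x > (0:ℝ), 0 < Kf x ∧ G (Kf x) = x := by
    intro x hx
    obtain ⟨h1, h2⟩ := hK₂ x hx
    exact ⟨h1, by simp only [hG]; rw [← hsplit (Kf x)]; exact h2⟩
  have hKmono : MonotoneOn Kf (Ioi 0) := by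
    intro x hx y hy hxy
    by_contra h
    push_neg at h
    have h2 := hGsm (mem_Ioi.mpr (hK₂' y hy).1) (mem_Ioi.mpr (hK₂' x hx).1) h
    rw [(hK₂' x hx).2, (hK₂' y hy).2] at h2
    exact absurd hxy (not_le.mpr h2)
  have hKtop : Tendsto Kf atTop atTop := by
    rw [tendsto_atTop]
    intro b
    have hT0 : (0:ℝ) < max b 1 := lt_of_lt_of_le one_pos (le_max_right _ _)
    filter_upwards [eventually_gt_atTop (max (G (max b 1)) 0)] with x hx
    have hx0 : 0 < x := lt_of_le_of_lt (le_max_right _ _) hx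
    have hGT : G (max b 1) < x := lt_of_le_of_lt (le_max_left _ _) hx
    obtain ⟨hk0, hkG⟩ := hK₂' x hx0
    by_contra h
    push_neg at h
    have hle : Kf x ≤ max b 1 := le_trans h.le (le_max_left _ _)
    have h2 : G (Kf x) ≤ G (max b 1) :=
      hGsm.monotoneOn (mem_Ioi.mpr hk0) (mem_Ioi.mpr hT0) hle
    rw [hkG] at h2
    linarith
  have hsqrt : ∀ x > (0:ℝ), Kf x / Real.sqrt x = Real.sqrt (Dfun μ X (Kf x)) := by
    intro x hx
    obtain ⟨hk0, hkG⟩ := hK₂' x hx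
    generalize hkf : Kf x = t at hk0 hkG ⊢
    subst hkG
    have hD0 := hDpos hk0
    simp only [hG]
    rw [Real.sqrt_div (sq_nonneg _), Real.sqrt_sq hk0.le]
    have hsq : (0:ℝ) < Real.sqrt (Dfun μ X t) := Real.sqrt_pos.mpr hD0
    field_simp
  have hKsqrtMono : MonotoneOn (fun x : ℝ => Kf x / Real.sqrt x) (Ioi 0) := by
    intro x hx y hy hxy
    simp only
    rw [hsqrt x hx, hsqrt y hy]
    exact Real.sqrt_le_sqrt (Dmono hXmeas hint (hKmono hx hy hxy))
  set L := ∫⁻ ω, ENNReal.ofReal ((X ω) ^ 2) ∂μ with hL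
  have hL0 : L ≠ 0 := by
    intro h
    rw [hL, lintegral_eq_zero_iff (hXmeas.pow_const 2).ennreal_ofReal] at h
    have habs' : (fun ω => |X ω|) =ᵐ[μ] (fun _ => (0:ℝ)) := by
      filter_upwards [h] with ω hω
      simp only [Pi.zero_apply, ENNReal.ofReal_eq_zero] at hω
      have h0 : (X ω) ^ 2 = 0 := le_antisymm hω (sq_nonneg _)
      rw [abs_eq_zero]
      exact pow_eq_zero_iff two_ne_zero |>.mp h0
    have hz : ∫ ω, |X ω| ∂μ = 0 := by
      rw [integral_congr_ae habs']; simp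
    rw [hz] at habs
    exact lt_irrefl 0 habs
  have h4 : (0:ℝ≥0∞) < L ^ (1/2 : ℝ) := by
    rw [pos_iff_ne_zero]
    simp only [ne_eq, ENNReal.rpow_eq_zero_iff, not_or, not_and_or]
    constructor
    · exact Or.inl hL0
    · right; norm_num
  have h5 : Tendsto (fun x : ℝ => ENNReal.ofReal (Kf x / Real.sqrt x)) atTop
      (𝓝 (L ^ (1/2 : ℝ))) := by
    have hcomp : Tendsto (fun x : ℝ => ENNReal.ofReal (Dfun μ X (Kf x))) atTop (𝓝 L) :=
      (Dlim hXmeas hint).comp hKtop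
    have hrpow : Tendsto (fun x : ℝ => (ENNReal.ofReal (Dfun μ X (Kf x))) ^ (1/2:ℝ))
        atTop (𝓝 (L ^ (1/2:ℝ))) :=
      (ENNReal.continuous_rpow_const.tendsto L).comp hcomp
    refine hrpow.congr' ?_
    filter_upwards [eventually_gt_atTop (0:ℝ)] with x hx
    have hD0 : (0:ℝ) ≤ Dfun μ X (Kf x) := (hDpos (hK₂' x hx).1).le
    rw [hsqrt x hx, Real.sqrt_eq_rpow, ← ENNReal.ofReal_rpow_of_nonneg hD0 (by norm_num)]
  have hlin : ∀ x > (0:ℝ), Kf x / x = Dfun μ X (Kf x) / Kf x := by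
    intro x hx
    obtain ⟨hk0, hkG⟩ := hK₂' x hx
    generalize hkf : Kf x = t at hk0 hkG ⊢
    subst hkG
    simp only [hG]
    have hD0 := hDpos hk0
    field_simp
  have hanti : AntitoneOn (fun x : ℝ => Kf x / x) (Ioi 0) := by
    intro x hx y hy hxy
    simp only
    rw [hlin x hx, hlin y hy]
    have hkx := (hK₂' x hx).1
    have hky := (hK₂' y hy).1
    rw [div_le_div_iff₀ hky hkx]
    calc Dfun μ X (Kf y) * Kf x = Kf x * Dfun μ X (Kf y) := mul_comm _ _
      _ ≤ Kf y * Dfun μ X (Kf x) := Dratio hXmeas hint hkx.le (hKmono hx hy hxy)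
      _ = Dfun μ X (Kf x) * Kf y := mul_comm _ _
  have hzero : Tendsto (fun x : ℝ => Kf x / x) atTop (𝓝 0) := by
    have h := (Dtendsto_zero hXmeas hint).comp hKtop
    refine h.congr' ?_
    filter_upwards [eventually_gt_atTop (0:ℝ)] with x hx
    exact (hlin x hx).symm
  exact ⟨hfeq ▸ hGcont, hfeq ▸ hGsm, hKsqrtMono, h4, h5, hanti, hzero⟩
end

section
/- Let X be a real-valued mean-zero random variable and {c_n} a sequence of positive reals satisfying (RE) and (REG) with ∑_{n=1}^∞ P{|X| ≥ c_n} < ∞. Set σ_n = √(H(c_n)), let p_j = P{c_{j−1} < |X| ≤ c_j} (with c_0 = 0). Then ∑_{ℓ=1}^∞ ∑_{k=1}^{2^ℓ} (σ²_{2^ℓ} − σ_k²)/c²_{2^ℓ} < ∞. -/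
open MeasureTheory ProbabilityTheory Filter Set Topology

/-- Auxiliary: the truncated second moment is monotone, and its increments are bounded
by `t²` times the measure of the corresponding annulus. -/
lemma trunc_diff_bound {Ω : Type*} [MeasurableSpace Ω] (μ : Measure Ω)
    [IsProbabilityMeasure μ] (X : Ω → ℝ) (hX : Measurable X) {s t : ℝ}
    (hst : s ≤ t) :
    0 ≤ truncSecondMoment μ X t - truncSecondMoment μ X s ∧
    truncSecondMoment μ X t - truncSecondMoment μ X s ≤
      t ^ 2 * (μ {ω | s < |X ω| ∧ |X ω| ≤ t}).toReal := by
  set A : Set Ω := {ω | |X ω| ≤ s} with hA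
  set B : Set Ω := {ω | |X ω| ≤ t} with hB
  have hAB : A ⊆ B := fun ω hω => le_trans hω hst
  have hAm : MeasurableSet A := measurableSet_le hX.abs measurable_const
  have hBm : MeasurableSet B := measurableSet_le hX.abs measurable_const
  have hintB : IntegrableOn (fun ω => X ω ^ 2) B μ := by
    apply Measure.integrableOn_of_bounded (M := t ^ 2) (measure_ne_top μ B)
      ((hX.pow_const 2).aestronglyMeasurable)
    refine (ae_restrict_iff' hBm).2 (Filter.Eventually.of_forall fun ω hω => ?_)
    have h : |X ω| ≤ t := hω
    calc ‖X ω ^ 2‖ = |X ω| ^ 2 := by rw [Real.norm_eq_abs, abs_pow]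
    _ ≤ t ^ 2 := pow_le_pow_left₀ (abs_nonneg _) h 2
  have hintA : IntegrableOn (fun ω => X ω ^ 2) A μ := hintB.mono_set hAB
  have hintD : IntegrableOn (fun ω => X ω ^ 2) (B \ A) μ := hintB.mono_set diff_subset
  have hsplit : truncSecondMoment μ X t
      = truncSecondMoment μ X s + ∫ ω in B \ A, X ω ^ 2 ∂μ := by
    rw [truncSecondMoment, truncSecondMoment, ← hA, ← hB,
      ← setIntegral_union disjoint_sdiff_self_right (hBm.diff hAm) hintA hintD,
      union_diff_cancel hAB]
  have hDeq : B \ A = {ω | s < |X ω| ∧ |X ω| ≤ t} := by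
    ext ω; simp only [hA, hB, mem_diff, mem_setOf_eq, not_le]; tauto
  constructor
  · rw [hsplit]
    have : 0 ≤ ∫ ω in B \ A, X ω ^ 2 ∂μ :=
      setIntegral_nonneg (hBm.diff hAm) (fun ω _ => sq_nonneg _)
    linarith
  · rw [hsplit, hDeq]
    have hb : ‖∫ ω in {ω | s < |X ω| ∧ |X ω| ≤ t}, X ω ^ 2 ∂μ‖ ≤
        t ^ 2 * (μ {ω | s < |X ω| ∧ |X ω| ≤ t}).toReal := by
      apply norm_setIntegral_le_of_norm_le_const (measure_lt_top μ _)
      · intro ω hω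
        have h : |X ω| ≤ t := hω.2
        calc ‖X ω ^ 2‖ = |X ω| ^ 2 := by rw [Real.norm_eq_abs, abs_pow]
        _ ≤ t ^ 2 := pow_le_pow_left₀ (abs_nonneg _) h 2
    have := le_trans (le_abs_self _) hb
    linarith

/-- **Step 3 of the proof of Theorem 2** (the key summability estimate).
With `σₙ² = H(cₙ)`, one has `∑_{ℓ} ∑_{k=1}^{2^ℓ} (σ²_{2^ℓ} - σ_k²)/c²_{2^ℓ} < ∞`. -/
theorem summable_dyadic_sigma_differences
    {Ω : Type*} [MeasurableSpace Ω] (μ : Measure Ω) [IsProbabilityMeasure μ]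
    (X : Ω → ℝ) (hXmeas : Measurable X)
    (hint : Integrable X μ) (hmean : ∫ ω, X ω ∂μ = 0)
    (c : ℕ → ℝ) (hcpos : ∀ n, 0 < c n)
    (hRE : Monotone fun n : ℕ => c n / Real.sqrt n)
    (hRE' : Tendsto (fun n : ℕ => c n / Real.sqrt n) atTop atTop)
    (hREG : ∀ ε > (0:ℝ), ∃ mₑ : ℕ, 1 ≤ mₑ ∧
      ∀ m n : ℕ, mₑ ≤ m → m < n → c n / c m ≤ (1 + ε) * ((n : ℝ) / m))
    (hsum : (∑' n : ℕ, μ {ω | c n ≤ |X ω|}) < ⊤) :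
    Summable (fun ℓ : ℕ => ∑ k ∈ Finset.Icc 1 (2 ^ ℓ),
      (truncSecondMoment μ X (c (2 ^ ℓ)) - truncSecondMoment μ X (c k))
        / c (2 ^ ℓ) ^ 2) := by
  -- notation
  set f : ℕ → ℝ := fun n => truncSecondMoment μ X (c n) with hf
  set P : ℕ → ℝ := fun j => (μ {ω | c j < |X ω| ∧ |X ω| ≤ c (j + 1)}).toReal with hPdef
  have hPnn : ∀ j, 0 ≤ P j := fun j => ENNReal.toReal_nonneg
  -- monotonicity of c on [1, ∞)
  have hcmono : ∀ ⦃a b : ℕ⦄, 1 ≤ a → a ≤ b → c a ≤ c b := by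
    intro a b ha hab
    have hsa : (0:ℝ) < Real.sqrt a := Real.sqrt_pos.2 (by exact_mod_cast ha)
    have hsb : (0:ℝ) < Real.sqrt b := Real.sqrt_pos.2 (by exact_mod_cast le_trans ha hab)
    have h1 : c a / Real.sqrt a ≤ c b / Real.sqrt b := hRE hab
    have h2 : Real.sqrt a ≤ Real.sqrt b := Real.sqrt_le_sqrt (by exact_mod_cast hab)
    calc c a = (c a / Real.sqrt a) * Real.sqrt a := by field_simp
    _ ≤ (c b / Real.sqrt b) * Real.sqrt b :=
        mul_le_mul h1 h2 hsa.le (div_nonneg (hcpos b).le hsb.le)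
    _ = c b := by field_simp
  -- quadratic growth comparison from (RE)
  have hcsq : ∀ j N : ℕ, 1 ≤ j → j ≤ N → c j ^ 2 * N ≤ c N ^ 2 * j := by
    intro j N hj hjN
    have hsj : (0:ℝ) < Real.sqrt j := Real.sqrt_pos.2 (by exact_mod_cast hj)
    have hsN : (0:ℝ) < Real.sqrt N := Real.sqrt_pos.2 (by exact_mod_cast le_trans hj hjN)
    have h1 : c j * Real.sqrt N ≤ c N * Real.sqrt j :=
      (div_le_div_iff₀ hsj hsN).1 (hRE hjN)
    have h2 : (c j * Real.sqrt N) ^ 2 ≤ (c N * Real.sqrt j) ^ 2 :=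
      pow_le_pow_left₀ (mul_nonneg (hcpos j).le hsN.le) h1 2
    rw [mul_pow, mul_pow, Real.sq_sqrt (Nat.cast_nonneg N),
      Real.sq_sqrt (Nat.cast_nonneg j)] at h2
    exact h2
  -- increments of f
  have hq : ∀ j : ℕ, 1 ≤ j → 0 ≤ f (j + 1) - f j ∧ f (j + 1) - f j ≤ c (j + 1) ^ 2 * P j :=
    fun j hj => trunc_diff_bound μ X hXmeas (hcmono hj (Nat.le_succ j))
  have hfmono : ∀ k N : ℕ, 1 ≤ k → k ≤ N → f k ≤ f N := by
    intro k N hk hkN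
    have := (trunc_diff_bound μ X hXmeas (hcmono hk hkN) (t := c N)).1
    linarith
  -- telescoping
  have htel : ∀ k N : ℕ, k ≤ N → f N - f k = ∑ j ∈ Finset.Ico k N, (f (j + 1) - f j) := by
    intro k N hkN
    rw [Finset.sum_Ico_eq_sub _ hkN, Finset.sum_range_sub f, Finset.sum_range_sub f]
    ring
  -- per-increment bound
  have hstep : ∀ j N : ℕ, 1 ≤ j → j < N →
      (f (j + 1) - f j) / c N ^ 2 ≤ (((j : ℝ) + 1) / N) * P j := by
    intro j N hj hjN
    have hcN2 : (0:ℝ) < c N ^ 2 := pow_pos (hcpos N) 2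
    have hNpos : (0:ℝ) < N := by
      have : 0 < N := by omega
      exact_mod_cast this
    have h1 := (hq j hj).2
    have h2 : c (j + 1) ^ 2 * N ≤ c N ^ 2 * (j + 1) := by
      have := hcsq (j + 1) N (by omega) (by omega)
      push_cast at this ⊢
      linarith
    calc (f (j + 1) - f j) / c N ^ 2 ≤ (c (j + 1) ^ 2 * P j) / c N ^ 2 := by gcongr
    _ ≤ (((j : ℝ) + 1) / N) * P j := by
          rw [div_le_iff₀ hcN2, div_mul_eq_mul_div, div_mul_eq_mul_div, le_div_iff₀ hNpos]
          nlinarith [mul_le_mul_of_nonneg_right h2 (hPnn j)]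
  -- Step A: bound the ℓ-th term by  b ℓ
  set b : ℕ → ℝ := fun ℓ => ∑ j ∈ Finset.Ico (1:ℕ) (2 ^ ℓ),
      ((j : ℝ) + 1) ^ 2 * P j * (1 / 2) ^ ℓ with hbdef
  have hbnn : ∀ ℓ, 0 ≤ b ℓ := by
    intro ℓ
    refine Finset.sum_nonneg fun j _ => ?_
    have := hPnn j
    positivity
  have hterm_nn : ∀ ℓ : ℕ, 0 ≤ ∑ k ∈ Finset.Icc 1 (2 ^ ℓ), (f (2 ^ ℓ) - f k) / c (2 ^ ℓ) ^ 2 := by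
    intro ℓ
    refine Finset.sum_nonneg fun k hk => ?_
    rcases Finset.mem_Icc.1 hk with ⟨hk1, hk2⟩
    have := hfmono k (2 ^ ℓ) hk1 hk2
    have hcN2 : (0:ℝ) < c (2 ^ ℓ) ^ 2 := pow_pos (hcpos _) 2
    apply div_nonneg (by linarith) hcN2.le
  have hterm_le : ∀ ℓ : ℕ,
      (∑ k ∈ Finset.Icc 1 (2 ^ ℓ), (f (2 ^ ℓ) - f k) / c (2 ^ ℓ) ^ 2) ≤ b ℓ := by
    intro ℓ
    set N := 2 ^ ℓ with hN
    have hN1 : 1 ≤ N := Nat.one_le_two_pow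
    have hNposR : (0:ℝ) < (N:ℝ) := by exact_mod_cast hN1
    calc ∑ k ∈ Finset.Icc 1 N, (f N - f k) / c N ^ 2
        = ∑ k ∈ Finset.Icc 1 N, ∑ j ∈ Finset.Ico k N, ((f (j + 1) - f j) / c N ^ 2) := by
          refine Finset.sum_congr rfl fun k hk => ?_
          rw [htel k N (Finset.mem_Icc.1 hk).2, Finset.sum_div]
    _ ≤ ∑ k ∈ Finset.Icc 1 N, ∑ j ∈ Finset.Ico k N, (((j : ℝ) + 1) / N) * P j := by
          refine Finset.sum_le_sum fun k hk => Finset.sum_le_sum fun j hj => ?_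
          rcases Finset.mem_Ico.1 hj with ⟨hj1, hj2⟩
          exact hstep j N (le_trans (Finset.mem_Icc.1 hk).1 hj1) hj2
    _ = ∑ k ∈ Finset.Icc 1 N, ∑ j ∈ Finset.Ico 1 N,
          (if k ≤ j then (((j : ℝ) + 1) / N) * P j else 0) := by
          refine Finset.sum_congr rfl fun k hk => ?_
          rw [← Finset.sum_filter]
          refine (Finset.sum_congr ?_ fun _ _ => rfl)
          ext j
          simp only [Finset.mem_Ico, Finset.mem_filter]
          have hk1 := (Finset.mem_Icc.1 hk).1
          omega
    _ = ∑ j ∈ Finset.Ico 1 N, ∑ k ∈ Finset.Icc 1 N,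
          (if k ≤ j then (((j : ℝ) + 1) / N) * P j else 0) := Finset.sum_comm
    _ ≤ b ℓ := by
          simp only [hbdef]
          rw [← hN]
          refine Finset.sum_le_sum fun j hj => ?_
          rcases Finset.mem_Ico.1 hj with ⟨hj1, hj2⟩
          rw [← Finset.sum_filter, Finset.sum_const, nsmul_eq_mul]
          have hcard : ((Finset.Icc 1 N).filter (· ≤ j)).card ≤ j := by
            have hsub : (Finset.Icc 1 N).filter (· ≤ j) ⊆ Finset.Icc 1 j := by
              intro k hk
              simp only [Finset.mem_filter, Finset.mem_Icc] at hk ⊢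
              omega
            simpa [Nat.card_Icc] using Finset.card_le_card hsub
          have hPj := hPnn j
          have h12 : ((1:ℝ)/2) ^ ℓ = 1 / (N:ℝ) := by
            rw [one_div_pow, hN]
            push_cast
            ring
          rw [h12]
          have hcardR : (((Finset.Icc 1 N).filter (· ≤ j)).card : ℝ) ≤ (j:ℝ) := by
            exact_mod_cast hcard
          calc (((Finset.Icc 1 N).filter (· ≤ j)).card : ℝ) * ((((j : ℝ) + 1) / N) * P j)
              ≤ (j:ℝ) * ((((j : ℝ) + 1) / N) * P j) := by
                apply mul_le_mul_of_nonneg_right hcardR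
                positivity
          _ ≤ ((j : ℝ) + 1) ^ 2 * P j * (1 / (N:ℝ)) := by
                have h : (j:ℝ) * (((j:ℝ) + 1) / (N:ℝ) * P j)
                    = ((j:ℝ) * ((j:ℝ) + 1) * P j) * (1 / (N:ℝ)) := by ring
                rw [h]
                apply mul_le_mul_of_nonneg_right _ (by positivity)
                nlinarith [mul_nonneg (hPnn j) (by positivity : (0:ℝ) ≤ (j:ℝ) + 1)]
  -- tail probabilities
  set T : ℕ → ℝ := fun m => (μ {ω | c m ≤ |X ω|}).toReal with hTdef
  set S : ℝ := (∑' n : ℕ, μ {ω | c n ≤ |X ω|}).toReal with hSdef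
  -- disjoint annuli bound
  have hannulus : ∀ m M : ℕ, 1 ≤ m → ∑ j ∈ Finset.Ico m M, P j ≤ T m := by
    intro m M hm
    set A : ℕ → Set Ω := fun j => {ω | c j < |X ω| ∧ |X ω| ≤ c (j + 1)} with hAdef
    have hAmeas : ∀ j, MeasurableSet (A j) :=
      fun j => (measurableSet_lt measurable_const hXmeas.abs).inter
        (measurableSet_le hXmeas.abs measurable_const)
    have key : ∀ i j : ℕ, 1 ≤ i → i < j → Disjoint (A i) (A j) := by
      intro i j hi1 hij'
      rw [Set.disjoint_left]
      rintro ω ⟨_, h2⟩ ⟨h3, _⟩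
      have : c (i + 1) ≤ c j := hcmono (by omega) (by omega)
      linarith
    have hdisj : (↑(Finset.Ico m M) : Set ℕ).PairwiseDisjoint A := by
      intro i hi j hj hij
      simp only [Finset.coe_Ico, mem_Ico] at hi hj
      rcases hij.lt_or_gt with h | h
      · exact key i j (le_trans hm hi.1) h
      · exact (key j i (le_trans hm hj.1) h).symm
    have h1 : ∑ j ∈ Finset.Ico m M, P j = (∑ j ∈ Finset.Ico m M, μ (A j)).toReal := by
      rw [ENNReal.toReal_sum (fun j _ => measure_ne_top μ _)]
    have h2 : (∑ j ∈ Finset.Ico m M, μ (A j)) ≤ μ {ω | c m ≤ |X ω|} := by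
      rw [← measure_biUnion_finset hdisj (fun j _ => hAmeas j)]
      apply measure_mono
      rintro ω hω
      simp only [mem_iUnion, Finset.mem_Ico, hAdef, mem_setOf_eq] at hω
      obtain ⟨j, hj, h3, _⟩ := hω
      have hcm : c m ≤ c j := hcmono hm hj.1
      exact le_of_lt (lt_of_le_of_lt hcm h3)
    rw [h1]
    exact ENNReal.toReal_mono (measure_ne_top μ _) h2
  have hTsumle : ∀ M : ℕ, ∑ m ∈ Finset.Ico 1 M, T m ≤ S := by
    intro M
    have h1 : ∑ m ∈ Finset.Ico 1 M, T m
        = (∑ m ∈ Finset.Ico 1 M, μ {ω | c m ≤ |X ω|}).toReal :=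
      (ENNReal.toReal_sum (fun m _ => measure_ne_top μ _)).symm
    rw [h1, hSdef]
    exact ENNReal.toReal_mono hsum.ne (ENNReal.sum_le_tsum _)
  have hjP : ∀ M : ℕ, ∑ j ∈ Finset.Ico 1 M, (j : ℝ) * P j ≤ S := by
    intro M
    calc ∑ j ∈ Finset.Ico 1 M, (j : ℝ) * P j
        = ∑ j ∈ Finset.Ico 1 M, ∑ m ∈ Finset.Ico 1 M, (if m ≤ j then P j else 0) := by
          refine Finset.sum_congr rfl fun j hj => ?_
          rcases Finset.mem_Ico.1 hj with ⟨hj1, hj2⟩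
          rw [← Finset.sum_filter]
          have heq : (Finset.Ico 1 M).filter (· ≤ j) = Finset.Icc 1 j := by
            ext k
            simp only [Finset.mem_filter, Finset.mem_Ico, Finset.mem_Icc]
            omega
          rw [heq, Finset.sum_const, Nat.card_Icc, nsmul_eq_mul]
          have hj' : j + 1 - 1 = j := by omega
          rw [hj']
    _ = ∑ m ∈ Finset.Ico 1 M, ∑ j ∈ Finset.Ico 1 M, (if m ≤ j then P j else 0) :=
          Finset.sum_comm
    _ ≤ ∑ m ∈ Finset.Ico 1 M, T m := by
          refine Finset.sum_le_sum fun m hm => ?_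
          rcases Finset.mem_Ico.1 hm with ⟨hm1, hm2⟩
          have heq : ∑ j ∈ Finset.Ico 1 M, (if m ≤ j then P j else 0)
              = ∑ j ∈ Finset.Ico m M, P j := by
            rw [← Finset.sum_filter]
            congr 1
            ext k
            simp only [Finset.mem_filter, Finset.mem_Ico]
            omega
          rw [heq]
          exact hannulus m M hm1
    _ ≤ S := hTsumle M
  -- geometric tail bound
  have hgeo : ∀ (L j : ℕ), 1 ≤ j →
      ∑ ℓ ∈ (Finset.range L).filter (fun ℓ => j < 2 ^ ℓ), ((1:ℝ) / 2) ^ ℓ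
        ≤ 2 / ((j : ℝ) + 1) := by
    intro L j hj
    set L0 := Nat.clog 2 (j + 1) with hL0
    have hsub : (Finset.range L).filter (fun ℓ => j < 2 ^ ℓ) ⊆ Finset.Ico L0 L := by
      intro ℓ hℓ
      simp only [Finset.mem_filter, Finset.mem_range] at hℓ
      simp only [Finset.mem_Ico]
      exact ⟨(Nat.clog_le_iff_le_pow (by norm_num)).2 hℓ.2, hℓ.1⟩
    have h1 : ∑ ℓ ∈ (Finset.range L).filter (fun ℓ => j < 2 ^ ℓ), ((1:ℝ) / 2) ^ ℓ
        ≤ ∑ ℓ ∈ Finset.Ico L0 L, ((1:ℝ) / 2) ^ ℓ :=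
      Finset.sum_le_sum_of_subset_of_nonneg hsub (fun ℓ _ _ => by positivity)
    have h2 : ∑ ℓ ∈ Finset.Ico L0 L, ((1:ℝ) / 2) ^ ℓ ≤ ((1:ℝ) / 2) ^ L0 * 2 := by
      rw [Finset.sum_Ico_eq_sum_range]
      simp_rw [pow_add]
      rw [← Finset.mul_sum]
      apply mul_le_mul_of_nonneg_left _ (by positivity)
      calc ∑ i ∈ Finset.range (L - L0), ((1:ℝ) / 2) ^ i ≤ ∑' i : ℕ, ((1:ℝ) / 2) ^ i :=
            Summable.sum_le_tsum _ (fun i _ => by positivity) summable_geometric_two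
      _ = 2 := tsum_geometric_two
    have h3 : ((1:ℝ) / 2) ^ L0 ≤ 1 / ((j : ℝ) + 1) := by
      rw [one_div_pow]
      have hle : ((j : ℝ) + 1) ≤ (2:ℝ) ^ L0 := by
        have h := Nat.le_pow_clog (by norm_num : 1 < 2) (j + 1)
        exact_mod_cast h
      exact one_div_le_one_div_of_le (by positivity) hle
    calc ∑ ℓ ∈ (Finset.range L).filter (fun ℓ => j < 2 ^ ℓ), ((1:ℝ) / 2) ^ ℓ
        ≤ ((1:ℝ) / 2) ^ L0 * 2 := le_trans h1 h2
    _ ≤ (1 / ((j : ℝ) + 1)) * 2 := mul_le_mul_of_nonneg_right h3 (by norm_num)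
    _ = 2 / ((j : ℝ) + 1) := by ring
  -- partial sums of b are bounded
  have hSL : ∀ L : ℕ, ∑ ℓ ∈ Finset.range L, b ℓ ≤ 4 * S := by
    intro L
    have hrect : ∀ ℓ ∈ Finset.range L, b ℓ = ∑ j ∈ Finset.Ico (1:ℕ) (2 ^ L),
        (if j < 2 ^ ℓ then ((j:ℝ) + 1) ^ 2 * P j * ((1:ℝ) / 2) ^ ℓ else 0) := by
      intro ℓ hℓ
      have hpow : 2 ^ ℓ ≤ 2 ^ L := Nat.pow_le_pow_right (by norm_num) (Finset.mem_range.1 hℓ).le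
      simp only [hbdef]
      rw [← Finset.sum_filter]
      congr 1
      ext k
      simp only [Finset.mem_filter, Finset.mem_Ico]
      omega
    calc ∑ ℓ ∈ Finset.range L, b ℓ
        = ∑ ℓ ∈ Finset.range L, ∑ j ∈ Finset.Ico (1:ℕ) (2 ^ L),
            (if j < 2 ^ ℓ then ((j:ℝ) + 1) ^ 2 * P j * ((1:ℝ) / 2) ^ ℓ else 0) :=
          Finset.sum_congr rfl hrect
    _ = ∑ j ∈ Finset.Ico (1:ℕ) (2 ^ L), ∑ ℓ ∈ Finset.range L,
            (if j < 2 ^ ℓ then ((j:ℝ) + 1) ^ 2 * P j * ((1:ℝ) / 2) ^ ℓ else 0) :=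
          Finset.sum_comm
    _ ≤ ∑ j ∈ Finset.Ico (1:ℕ) (2 ^ L), 4 * ((j:ℝ) * P j) := by
          refine Finset.sum_le_sum fun j hj => ?_
          rcases Finset.mem_Ico.1 hj with ⟨hj1, _⟩
          rw [← Finset.sum_filter, ← Finset.mul_sum]
          have hg := hgeo L j hj1
          have hnn : (0:ℝ) ≤ ((j:ℝ) + 1) ^ 2 * P j := mul_nonneg (by positivity) (hPnn j)
          refine le_trans (mul_le_mul_of_nonneg_left hg hnn) ?_
          have hcast1 : (1:ℝ) ≤ (j:ℝ) := by exact_mod_cast hj1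
          have heq : ((j:ℝ) + 1) ^ 2 * P j * (2 / ((j:ℝ) + 1)) = 2 * ((j:ℝ) + 1) * P j := by
            field_simp
          rw [heq]
          nlinarith [hPnn j]
    _ = 4 * ∑ j ∈ Finset.Ico (1:ℕ) (2 ^ L), (j:ℝ) * P j := by rw [Finset.mul_sum]
    _ ≤ 4 * S := by
          have := hjP (2 ^ L)
          linarith
  exact Summable.of_nonneg_of_le hterm_nn hterm_le (summable_of_sum_range_le hbnn hSL)
end

section
/- Let X be a real-valued mean-zero random variable and {c_n} a sequence of positive reals satisfying (RE) and (REG) with ∑_{n=1}^∞ P{|X| ≥ c_n} < ∞. For 0 < δ < 1 define α̃₀ = sup{α ≥ 0 : ∑_{n=1}^∞ n^{-1} exp(−α² c_n²/(2 n H(δ c_n))) = ∞}. Then α̃₀ = α₀. -/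
open MeasureTheory ProbabilityTheory Filter Set Topology ENNReal

section Aux

variable {Ω : Type*} [MeasurableSpace Ω] {μ : Measure Ω} [IsProbabilityMeasure μ]
  {X : Ω → ℝ}

private lemma aux_measSet (hX : Measurable X) (t : ℝ) :
    MeasurableSet {ω | |X ω| ≤ t} :=
  measurableSet_le hX.abs measurable_const

private lemma aux_integrableOn (hX : Measurable X) (t : ℝ) :
    IntegrableOn (fun ω => X ω ^ 2) {ω | |X ω| ≤ t} μ := by
  apply Measure.integrableOn_of_bounded (M := t ^ 2) (measure_ne_top _ _)
    ((hX.pow_const 2).aestronglyMeasurable)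
  have h : ∀ᵐ ω ∂(μ.restrict {ω | |X ω| ≤ t}), |X ω| ≤ t :=
    ae_restrict_of_forall_mem (aux_measSet hX t) (fun ω hω => hω)
  filter_upwards [h] with ω hω
  rw [Real.norm_eq_abs, abs_of_nonneg (sq_nonneg _)]
  exact sq_le_sq' (by linarith [(abs_le.1 hω).1]) (abs_le.1 hω).2

private lemma aux_nonneg (hX : Measurable X) (t : ℝ) :
    0 ≤ truncSecondMoment μ X t :=
  setIntegral_nonneg (aux_measSet hX t) (fun ω _ => sq_nonneg _)

private lemma aux_mono (hX : Measurable X) {s t : ℝ} (hst : s ≤ t) :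
    truncSecondMoment μ X s ≤ truncSecondMoment μ X t := by
  apply setIntegral_mono_set (aux_integrableOn hX t)
    (Filter.Eventually.of_forall fun ω => sq_nonneg _)
  have hsub : {ω | |X ω| ≤ s} ⊆ {ω | |X ω| ≤ t} := fun ω hω => le_trans hω hst
  exact hsub.eventuallyLE

private lemma aux_diff_le (hX : Measurable X) {s t : ℝ} (hst : s ≤ t) :
    truncSecondMoment μ X t - truncSecondMoment μ X s
      ≤ t ^ 2 * (μ {ω | s ≤ |X ω|}).toReal := by
  set A := {ω | |X ω| ≤ t}
  set B := {ω | |X ω| ≤ s}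
  have hBA : B ⊆ A := fun ω hω => le_trans hω hst
  have hAB : A \ B ⊆ {ω | s ≤ |X ω|} := fun ω hω => show s ≤ |X ω| from le_of_not_ge hω.2
  have hdiff : truncSecondMoment μ X t - truncSecondMoment μ X s
      = ∫ ω in A \ B, X ω ^ 2 ∂μ := by
    rw [truncSecondMoment, truncSecondMoment,
      integral_diff (aux_measSet hX s) (aux_integrableOn hX t) hBA]
  rw [hdiff]
  calc ∫ ω in A \ B, X ω ^ 2 ∂μ
      ≤ ∫ _ω in A \ B, t ^ 2 ∂μ := by
        apply setIntegral_mono_on ((aux_integrableOn hX t).mono_set diff_subset)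
          (by exact integrableOn_const (measure_ne_top _ _) enorm_ne_top)
          ((aux_measSet hX t).diff (aux_measSet hX s))
        intro ω hω
        have habs : |X ω| ≤ t := hω.1
        exact sq_le_sq' (by linarith [(abs_le.1 habs).1]) (abs_le.1 habs).2
    _ = (μ (A \ B)).toReal * t ^ 2 := by rw [setIntegral_const]; rfl
    _ ≤ (μ {ω | s ≤ |X ω|}).toReal * t ^ 2 := by
        apply mul_le_mul_of_nonneg_right _ (sq_nonneg _)
        exact ENNReal.toReal_mono (measure_ne_top _ _) (measure_mono hAB)
    _ = t ^ 2 * (μ {ω | s ≤ |X ω|}).toReal := mul_comm _ _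

end Aux

private lemma aux_summable_comp_div (q : ℕ → ℝ) (hq : Summable q)
    (hq0 : ∀ n, 0 ≤ q n) (K : ℕ) (hK : 0 < K) :
    Summable fun n : ℕ => q (n / K) := by
  haveI : NeZero K := ⟨hK.ne'⟩
  have hprod : Summable (fun p : ℕ × Fin K => q p.1) := by
    rw [summable_prod_of_nonneg (fun p => hq0 p.1)]
    refine ⟨fun m => Summable.of_finite, ?_⟩
    have : (fun m : ℕ => ∑' _ : Fin K, q m) = fun m => (K : ℝ) * q m := by
      funext m
      rw [tsum_fintype]
      simp [nsmul_eq_mul]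
    rw [this]
    exact hq.mul_left _
  have := (Nat.divModEquiv K).summable_iff (f := fun p : ℕ × Fin K => q p.1)
  exact this.2 hprod

/-- Easy comparison: replacing `Hδ` by the larger `H1` only increases the terms,
so summability transfers downwards. -/
private lemma aux_easy (c H1 Hδ : ℕ → ℝ) (N : ℕ) (hN1 : 1 ≤ N)
    (hpos : ∀ n, N ≤ n → 0 < Hδ n)
    (hle : ∀ n, N ≤ n → Hδ n ≤ H1 n)
    (α : ℝ)
    (hs : Summable (fun n : ℕ => (n : ℝ)⁻¹ *
      Real.exp (-(α ^ 2 * c n ^ 2) / (2 * n * H1 n)))) :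
    Summable (fun n : ℕ => (n : ℝ)⁻¹ *
      Real.exp (-(α ^ 2 * c n ^ 2) / (2 * n * Hδ n))) := by
  rw [← _root_.summable_nat_add_iff N]
  have hg : Summable (fun n : ℕ => ((n + N : ℕ) : ℝ)⁻¹ *
      Real.exp (-(α ^ 2 * c (n + N) ^ 2) / (2 * ((n + N : ℕ) : ℝ) * H1 (n + N)))) :=
    (_root_.summable_nat_add_iff N).2 hs
  refine Summable.of_nonneg_of_le (fun n => by positivity) (fun n => ?_) hg
  set m := n + N with hm
  have hmN : N ≤ m := by omega
  have hmpos : (0 : ℝ) < m := by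
    have : 1 ≤ m := le_trans hN1 hmN
    exact_mod_cast Nat.lt_of_lt_of_le Nat.zero_lt_one this
  have hδpos := hpos m hmN
  have h1pos : 0 < H1 m := lt_of_lt_of_le hδpos (hle m hmN)
  apply mul_le_mul_of_nonneg_left _ (by positivity)
  apply Real.exp_le_exp.2
  rw [neg_div, neg_div, neg_le_neg_iff]
  rw [div_le_div_iff₀ (by positivity) (by positivity)]
  have hc2 : 0 ≤ α ^ 2 * c m ^ 2 := by positivity
  nlinarith [hle m hmN, mul_le_mul_of_nonneg_left (hle m hmN) (mul_nonneg (mul_nonneg (by norm_num : (0:ℝ) ≤ 2) hmpos.le) hc2)]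

/-- Hard comparison: if the series with `H1` diverges at level `α`, then the series
with `Hδ` diverges at any smaller level `α'`, using the bound on `H1 - Hδ`. -/
private lemma aux_hard (c H1 Hδ p : ℕ → ℝ) (N : ℕ) (hN1 : 1 ≤ N)
    (hpos : ∀ n, N ≤ n → 0 < Hδ n)
    (hle : ∀ n, N ≤ n → Hδ n ≤ H1 n)
    (hdiff : ∀ n, N ≤ n → H1 n - Hδ n ≤ c n ^ 2 * p n)
    (hcpos : ∀ n, 0 < c n)
    (hp0 : ∀ n, 0 ≤ p n) (hp : Summable p)
    (α α' : ℝ) (h0 : 0 ≤ α') (hlt : α' < α)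
    (hdiv : ¬ Summable (fun n : ℕ => (n : ℝ)⁻¹ *
      Real.exp (-(α ^ 2 * c n ^ 2) / (2 * n * H1 n)))) :
    ¬ Summable (fun n : ℕ => (n : ℝ)⁻¹ *
      Real.exp (-(α' ^ 2 * c n ^ 2) / (2 * n * Hδ n))) := by
  intro hs
  apply hdiv
  have hα : 0 < α := lt_of_le_of_lt h0 hlt
  have hαα : 0 < α ^ 2 - α' ^ 2 := by nlinarith
  set C : ℝ := 2 / (α ^ 2 - α' ^ 2) with hC
  have hC0 : 0 ≤ C := by positivity
  -- pointwise bound for n ≥ N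
  have key : ∀ n, N ≤ n →
      (n : ℝ)⁻¹ * Real.exp (-(α ^ 2 * c n ^ 2) / (2 * n * H1 n))
        ≤ (n : ℝ)⁻¹ * Real.exp (-(α' ^ 2 * c n ^ 2) / (2 * n * Hδ n)) + C * p n := by
    intro n hn
    have hnpos : (0 : ℝ) < n := by
      have : 1 ≤ n := le_trans hN1 hn
      exact_mod_cast Nat.lt_of_lt_of_le Nat.zero_lt_one this
    have hδpos := hpos n hn
    have h1pos : 0 < H1 n := lt_of_lt_of_le hδpos (hle n hn)
    have hcn := hcpos n
    by_cases hcase : α' ^ 2 * H1 n ≤ α ^ 2 * Hδ n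
    · -- term ≤ first summand
      have h1 : (n : ℝ)⁻¹ * Real.exp (-(α ^ 2 * c n ^ 2) / (2 * n * H1 n))
          ≤ (n : ℝ)⁻¹ * Real.exp (-(α' ^ 2 * c n ^ 2) / (2 * n * Hδ n)) := by
        apply mul_le_mul_of_nonneg_left _ (by positivity)
        apply Real.exp_le_exp.2
        rw [neg_div, neg_div, neg_le_neg_iff]
        rw [div_le_div_iff₀ (by positivity) (by positivity)]
        nlinarith [sq_nonneg (c n), mul_le_mul_of_nonneg_left hcase
          (mul_nonneg (mul_nonneg (by norm_num : (0:ℝ) ≤ 2) hnpos.le) (sq_nonneg (c n)))]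
      have h2 : 0 ≤ C * p n := mul_nonneg hC0 (hp0 n)
      linarith
    · -- degenerate index: H1 n is dominated by the tail probability
      push_neg at hcase
      have hH1p : (α ^ 2 - α' ^ 2) * H1 n ≤ α ^ 2 * (c n ^ 2 * p n) := by
        have h := hdiff n hn
        nlinarith
      have hppos : 0 < p n := by
        by_contra hple
        push_neg at hple
        have hp0n : p n = 0 := le_antisymm hple (hp0 n)
        rw [hp0n, mul_zero] at hH1p
        nlinarith [mul_pos hαα h1pos]
      -- exponent lower bound
      set x : ℝ := (α ^ 2 - α' ^ 2) / (2 * n * p n) with hx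
      have hxpos : 0 < x := by positivity
      have hexp : (α ^ 2 - α' ^ 2) / (2 * n * p n)
          ≤ (α ^ 2 * c n ^ 2) / (2 * n * H1 n) := by
        rw [div_le_div_iff₀ (by positivity) (by positivity)]
        nlinarith [mul_le_mul_of_nonneg_left hH1p (mul_nonneg (by norm_num : (0:ℝ) ≤ 2) hnpos.le)]
      have hterm : Real.exp (-(α ^ 2 * c n ^ 2) / (2 * n * H1 n)) ≤ x⁻¹ := by
        rw [neg_div]
        calc Real.exp (-((α ^ 2 * c n ^ 2) / (2 * n * H1 n)))
            ≤ Real.exp (-x) := Real.exp_le_exp.2 (neg_le_neg hexp)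
          _ ≤ x⁻¹ := by
              rw [Real.exp_neg]
              apply inv_anti₀ hxpos
              linarith [Real.add_one_le_exp x]
      have hxinv : x⁻¹ = (2 * n * p n) / (α ^ 2 - α' ^ 2) := by
        rw [hx, inv_div]
      have h3 : (n : ℝ)⁻¹ * Real.exp (-(α ^ 2 * c n ^ 2) / (2 * n * H1 n))
          ≤ (n : ℝ)⁻¹ * x⁻¹ := mul_le_mul_of_nonneg_left hterm (by positivity)
      have h4 : (n : ℝ)⁻¹ * x⁻¹ = C * p n := by
        rw [hxinv, hC]
        field_simp
      have h5 : 0 ≤ (n : ℝ)⁻¹ * Real.exp (-(α' ^ 2 * c n ^ 2) / (2 * n * Hδ n)) := by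
        positivity
      linarith
  -- now conclude summability by comparison on the tail
  rw [← _root_.summable_nat_add_iff N]
  have hg : Summable (fun n : ℕ => ((n + N : ℕ) : ℝ)⁻¹ *
      Real.exp (-(α' ^ 2 * c (n + N) ^ 2) / (2 * ((n + N : ℕ) : ℝ) * Hδ (n + N)))
        + C * p (n + N)) :=
    ((_root_.summable_nat_add_iff N).2 hs).add
      ((_root_.summable_nat_add_iff N).2 (hp.mul_left C))
  exact Summable.of_nonneg_of_le (fun n => by positivity)
    (fun n => key (n + N) (by omega)) hg

set_option maxHeartbeats 1600000

/-- **Lemma 2.**  For `0 < δ < 1`, the parameter `α₀` is unchanged if `H(cₙ)` is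
replaced by `H(δ cₙ)` in its definition (the suprema being computed in `[0,∞]`). -/
theorem alpha0_invariant_under_delta_truncation
    {Ω : Type*} [MeasurableSpace Ω] (μ : Measure Ω) [IsProbabilityMeasure μ]
    (X : Ω → ℝ) (hXmeas : Measurable X)
    (hint : Integrable X μ) (hmean : ∫ ω, X ω ∂μ = 0)
    (c : ℕ → ℝ) (hcpos : ∀ n, 0 < c n)
    (hRE : Monotone fun n : ℕ => c n / Real.sqrt n)
    (hRE' : Tendsto (fun n : ℕ => c n / Real.sqrt n) atTop atTop)
    (hREG : ∀ ε > (0:ℝ), ∃ mₑ : ℕ, 1 ≤ mₑ ∧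
      ∀ m n : ℕ, mₑ ≤ m → m < n → c n / c m ≤ (1 + ε) * ((n : ℝ) / m))
    (hsum : (∑' n : ℕ, μ {ω | c n ≤ |X ω|}) < ⊤)
    (δ : ℝ) (hδ₀ : 0 < δ) (hδ₁ : δ < 1) :
    sSup (ENNReal.ofReal '' alphaSet c (fun t => truncSecondMoment μ X (δ * t)))
      = sSup (ENNReal.ofReal '' alphaSet c (truncSecondMoment μ X)) := by
  classical
  have hsqrt_pos : ∀ n : ℕ, 1 ≤ n → (0:ℝ) < Real.sqrt n := fun n hn =>
    Real.sqrt_pos.2 (by exact_mod_cast Nat.lt_of_lt_of_le Nat.zero_lt_one hn)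
  have hc_le : ∀ m n : ℕ, 1 ≤ m → m ≤ n →
      c m ≤ Real.sqrt m * (c n / Real.sqrt n) := by
    intro m n hm hmn
    have h := hRE hmn
    have hm' := hsqrt_pos m hm
    calc c m = Real.sqrt m * (c m / Real.sqrt m) := by field_simp
      _ ≤ Real.sqrt m * (c n / Real.sqrt n) :=
          mul_le_mul_of_nonneg_left h (Real.sqrt_nonneg _)
  have hc_mono : ∀ m n : ℕ, 1 ≤ m → m ≤ n → c m ≤ c n := by
    intro m n hm hmn
    have hn : 1 ≤ n := le_trans hm hmn
    have hn' := hsqrt_pos n hn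
    calc c m ≤ Real.sqrt m * (c n / Real.sqrt n) := hc_le m n hm hmn
      _ ≤ Real.sqrt n * (c n / Real.sqrt n) := by
          exact mul_le_mul_of_nonneg_right
            (Real.sqrt_le_sqrt (by exact_mod_cast hmn))
            (div_nonneg (hcpos n).le (Real.sqrt_nonneg _))
      _ = c n := by field_simp
  have hctop : Tendsto c atTop atTop := by
    apply tendsto_atTop_mono' atTop _ hRE'
    filter_upwards [eventually_ge_atTop 1] with n hn
    exact div_le_self (hcpos n).le (Real.one_le_sqrt.2 (by exact_mod_cast hn))
  by_cases hdeg : ∀ n : ℕ, truncSecondMoment μ X (δ * c n) = 0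
  · -- degenerate case: both truncated moments vanish along the sequence
    have hH0 : ∀ n : ℕ, truncSecondMoment μ X (c n) = 0 := by
      intro n
      obtain ⟨m, hm⟩ := (hctop.eventually_ge_atTop (c n / δ)).exists
      have h1 : c n ≤ δ * c m := by
        rw [div_le_iff₀ hδ₀] at hm; linarith
      have h2 : truncSecondMoment μ X (c n) ≤ truncSecondMoment μ X (δ * c m) :=
        aux_mono (μ := μ) hXmeas h1
      rw [hdeg m] at h2
      exact le_antisymm h2 (aux_nonneg hXmeas (c n))
    have hset : alphaSet c (fun t => truncSecondMoment μ X (δ * t))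
        = alphaSet c (truncSecondMoment μ X) := by
      unfold alphaSet
      ext α
      simp only [Set.mem_setOf_eq]
      have heq : (fun n : ℕ => (n : ℝ)⁻¹ * Real.exp (-(α ^ 2 * c n ^ 2) /
            (2 * n * truncSecondMoment μ X (δ * c n))))
          = (fun n : ℕ => (n : ℝ)⁻¹ * Real.exp (-(α ^ 2 * c n ^ 2) /
            (2 * n * truncSecondMoment μ X (c n)))) := by
        funext n; rw [hdeg n, hH0 n]
      rw [heq]
    rw [hset]
  · push_neg at hdeg
    obtain ⟨n₀, hn₀⟩ := hdeg
    have hδc0 : 0 < truncSecondMoment μ X (δ * c n₀) :=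
      lt_of_le_of_ne (aux_nonneg hXmeas _) (Ne.symm hn₀)
    obtain ⟨N₀, hN₀⟩ := eventually_atTop.1 (hctop.eventually_ge_atTop (c n₀))
    set N := max N₀ 1 with hN
    have hN1 : 1 ≤ N := le_max_right _ _
    have hpos : ∀ n, N ≤ n → 0 < truncSecondMoment μ X (δ * c n) := by
      intro n hn
      have h1 : c n₀ ≤ c n := hN₀ n (le_trans (le_max_left _ _) hn)
      exact lt_of_lt_of_le hδc0 (aux_mono hXmeas (by nlinarith))
    have hle : ∀ n, N ≤ n →
        truncSecondMoment μ X (δ * c n) ≤ truncSecondMoment μ X (c n) := by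
      intro n _
      exact aux_mono hXmeas (by nlinarith [hcpos n])
    set q : ℕ → ℝ := fun n => (μ {ω | c n ≤ |X ω|}).toReal with hq
    set p : ℕ → ℝ := fun n => (μ {ω | δ * c n ≤ |X ω|}).toReal with hp
    have hqsum : Summable q := ENNReal.summable_toReal hsum.ne
    set K : ℕ := ⌈δ⁻¹ ^ 2⌉₊ with hK
    have hK1 : 1 ≤ K := Nat.one_le_ceil_iff.2 (by positivity)
    have hKpos : 0 < K := hK1
    have hcK : ∀ n : ℕ, K ≤ n → c (n / K) ≤ δ * c n := by
      intro n hn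
      have hm1 : 1 ≤ n / K := (Nat.one_le_div_iff hKpos).2 hn
      have hmn : n / K ≤ n := Nat.div_le_self n K
      have hn1 : 1 ≤ n := le_trans hK1 hn
      have hn' := hsqrt_pos n hn1
      have h1 : c (n / K) ≤ Real.sqrt ((n / K : ℕ) : ℝ) * (c n / Real.sqrt n) :=
        hc_le _ n hm1 hmn
      have h2 : Real.sqrt ((n / K : ℕ) : ℝ) ≤ δ * Real.sqrt n := by
        have hrw : δ * Real.sqrt n = Real.sqrt (δ ^ 2 * n) := by
          rw [Real.sqrt_mul (sq_nonneg δ), Real.sqrt_sq hδ₀.le]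
        rw [hrw]
        apply Real.sqrt_le_sqrt
        have h3 : ((n / K : ℕ) : ℝ) ≤ (n : ℝ) / K := Nat.cast_div_le
        have h4 : (n : ℝ) / K ≤ δ ^ 2 * n := by
          rw [div_le_iff₀ (by exact_mod_cast hKpos)]
          have h5 : δ⁻¹ ^ 2 ≤ (K : ℝ) := Nat.le_ceil _
          calc (n : ℝ) = δ ^ 2 * n * δ⁻¹ ^ 2 := by field_simp
            _ ≤ δ ^ 2 * n * K := by
                apply mul_le_mul_of_nonneg_left h5 (by positivity)
            _ = δ ^ 2 * (n : ℝ) * K := rfl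
        linarith
      calc c (n / K) ≤ Real.sqrt ((n / K : ℕ) : ℝ) * (c n / Real.sqrt n) := h1
        _ ≤ (δ * Real.sqrt n) * (c n / Real.sqrt n) :=
            mul_le_mul_of_nonneg_right h2
              (div_nonneg (hcpos n).le (Real.sqrt_nonneg _))
        _ = δ * c n := by field_simp
    have hpq : ∀ n : ℕ, K ≤ n → p n ≤ q (n / K) := by
      intro n hn
      apply ENNReal.toReal_mono (measure_ne_top _ _)
      apply measure_mono
      intro ω hω
      exact le_trans (hcK n hn) hω
    have hpsum : Summable p := by
      rw [← _root_.summable_nat_add_iff K]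
      have hg : Summable (fun n : ℕ => q ((n + K) / K)) :=
        (_root_.summable_nat_add_iff K).2
          (aux_summable_comp_div q hqsum (fun n => ENNReal.toReal_nonneg) K hKpos)
      exact Summable.of_nonneg_of_le (fun n => ENNReal.toReal_nonneg)
        (fun n => hpq (n + K) (by omega)) hg
    have hdiffb : ∀ n, N ≤ n → truncSecondMoment μ X (c n)
        - truncSecondMoment μ X (δ * c n) ≤ c n ^ 2 * p n := by
      intro n _
      exact aux_diff_le hXmeas (by nlinarith [hcpos n])
    apply le_antisymm
    · apply sSup_le_sSup
      apply Set.image_mono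
      intro α hα
      refine ⟨hα.1, fun hsummable => hα.2 ?_⟩
      exact aux_easy c (fun n => truncSecondMoment μ X (c n))
        (fun n => truncSecondMoment μ X (δ * c n)) N hN1 hpos hle α hsummable
    · apply sSup_le
      rintro b ⟨α, hα, rfl⟩
      refine le_of_forall_lt fun b hb => ?_
      have hbt : b ≠ ⊤ := (hb.trans ENNReal.ofReal_lt_top).ne
      have h1 : b.toReal < α := ENNReal.toReal_lt_of_lt_ofReal hb
      have hb0 : (0:ℝ) ≤ b.toReal := ENNReal.toReal_nonneg
      set β := (b.toReal + α) / 2 with hβ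
      have hβ0 : 0 ≤ β := by
        have := hα.1; rw [hβ]; linarith
      have hβα : β < α := by rw [hβ]; linarith
      have h2 : b.toReal < β := by rw [hβ]; linarith
      have hβmem : β ∈ alphaSet c (fun t => truncSecondMoment μ X (δ * t)) :=
        ⟨hβ0, aux_hard c (fun n => truncSecondMoment μ X (c n))
          (fun n => truncSecondMoment μ X (δ * c n)) p N hN1 hpos hle hdiffb
          hcpos (fun n => ENNReal.toReal_nonneg) hpsum α β hβ0 hβα hα.2⟩
      calc b < ENNReal.ofReal β := (ENNReal.lt_ofReal_iff_toReal_lt hbt).2 h2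
        _ ≤ sSup (ENNReal.ofReal ''
              alphaSet c (fun t => truncSecondMoment μ X (δ * t))) :=
            le_sSup ⟨β, hβmem, rfl⟩
end
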